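/- Determinacy for compatible-action systems where inputs and outputs commute strongly implies confluence: if p is determinate (hence τ-inert), and all pairs of distinct compatible non-τ actions satisfy the one-step commutation squares up to structural equivalence ≡ ⊆ ≈, then p is confluent. -/

import Mathlib

/-!
Determinacy passes to derivatives, and at a determinate state `q` any two weak
`α`-derivatives are bisimilar (for `α = τ` this is τ-inertness). Since weak joinability is
invariant under bisimilarity, two weak moves `q ⟹α q₁`, `q ⟹β q₂` may be replaced by any
other pair of weak moves with the same labels. For distinct visible `α`, `β`, write the
`β`-move as `q →τ* a →β ·`; as `q ≈ a`, the state `a` answers the `α`-move by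
`a →τ* a' →α ·`, the `β`-step commutes past `a →τ* a'`, and the strong diamond at `a'`
closes the square. The remaining cases (`α = β`, or one label `τ`) follow from determinacy
and the residual laws alone.
-/

/-- Reflexive-transitive closure of τ-steps. -/
def TauStar {P A : Type} (step : P → A → P → Prop) (τ : A) : P → P → Prop :=
  Relation.ReflTransGen (fun p q => step p τ q)

/-- Weak step: τ*-closure for τ, and τ* ∘ step α ∘ τ* otherwise. -/
def Weak {P A : Type} (step : P → A → P → Prop) (τ : A) (α : A) (p q : P) : Prop :=
  (α = τ ∧ TauStar step τ p q) ∨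
  (α ≠ τ ∧ ∃ a b, TauStar step τ p a ∧ step a α b ∧ TauStar step τ b q)

/-- Labelled bisimulation: symmetric, strong challenge, weak response. -/
def IsBisim {P A : Type} (step : P → A → P → Prop) (τ : A) (R : P → P → Prop) : Prop :=
  Symmetric R ∧
  ∀ p q α p', R p q → step p α p' → ∃ q', Weak step τ α q q' ∧ R p' q'

/-- Weak bisimilarity: the union of all bisimulations. -/
def Bisim {P A : Type} (step : P → A → P → Prop) (τ : A) (p q : P) : Prop :=
  ∃ R, IsBisim step τ R ∧ R p q

/-- A derivative: reachable by finitely many weak steps. -/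
def Deriv {P A : Type} (step : P → A → P → Prop) (τ : A) : P → P → Prop :=
  Relation.ReflTransGen (fun a b => ∃ α, Weak step τ α a b)

/-- Confluence: all compatible weak steps from any derivative can be closed
up to residuals and bisimilarity. -/
def Confluent {P A : Type} (step : P → A → P → Prop) (τ : A)
    (compat : A → A → Prop) (res : A → A → A) (p : P) : Prop :=
  ∀ q, Deriv step τ p q → ∀ α β q₁ q₂, compat α β →
    Weak step τ α q q₁ → Weak step τ β q q₂ →
    ∃ q₃ q₄, Weak step τ (res β α) q₁ q₃ ∧ Weak step τ (res α β) q₂ q₄ ∧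
      Bisim step τ q₃ q₄

/-- Weak transition along a finite sequence of (non-τ) actions;
the empty sequence is weak τ-closure. -/
def WeakSeq {P A : Type} (step : P → A → P → Prop) (τ : A) :
    List A → P → P → Prop
  | [], p, q => TauStar step τ p q
  | α :: s, p, q => ∃ r, Weak step τ α p r ∧ WeakSeq step τ s r q

/-- Determinacy: performing twice the same sequence of non-τ interactions
leads to bisimilar programs. -/
def Determinate {P A : Type} (step : P → A → P → Prop) (τ : A) (p : P) : Prop :=
  ∀ s : List A, (∀ α ∈ s, α ≠ τ) → ∀ p₁ p₂,
    WeakSeq step τ s p p₁ → WeakSeq step τ s p p₂ → Bisim step τ p₁ p₂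

def StronglyCommutes {P A : Type} (step : P → A → P → Prop) (τ : A)
    (compat : A → A → Prop) (res : A → A → A) (equiv : P → P → Prop) (p : P) : Prop :=
  ∀ q, Deriv step τ p q → ∀ α β q₁ q₂,
    α ≠ β → α ≠ τ → β ≠ τ → compat α β →
    step q α q₁ → step q β q₂ →
    ∃ q₃ q₄, step q₁ (res β α) q₃ ∧ step q₂ (res α β) q₄ ∧ equiv q₃ q₄

def TauCommutes {P A : Type} (step : P → A → P → Prop) (τ : A) (p : P) : Prop :=
  ∀ q, Deriv step τ p q → ∀ β q₁' q₂', β ≠ τ →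
    TauStar step τ q q₁' → step q β q₂' →
    ∃ q₃', step q₁' β q₃' ∧ TauStar step τ q₂' q₃'

def WeakJoinable {P A : Type} (step : P → A → P → Prop) (τ : A) (γ δ : A) (q₁ q₂ : P) :
    Prop :=
  ∃ q₃ q₄, Weak step τ γ q₁ q₃ ∧ Weak step τ δ q₂ q₄ ∧ Bisim step τ q₃ q₄

section

variable {P A : Type} {step : P → A → P → Prop} {τ : A}

theorem weak_tau_iff {p q : P} : Weak step τ τ p q ↔ TauStar step τ p q := by
  constructor
  · rintro (⟨-, h⟩ | ⟨hne, -⟩)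
    exacts [h, absurd rfl hne]
  · exact fun h => Or.inl ⟨rfl, h⟩

theorem Weak.refl_tau (p : P) : Weak step τ τ p p :=
  weak_tau_iff.2 .refl

theorem Weak.of_step {p q : P} {α : A} (h : step p α q) : Weak step τ α p q := by
  by_cases hα : α = τ
  · subst hα
    exact weak_tau_iff.2 (.single h)
  · exact Or.inr ⟨hα, p, q, .refl, h, .refl⟩

theorem TauStar.trans_weak {p q r : P} {α : A} (h₁ : TauStar step τ p q)
    (h₂ : Weak step τ α q r) : Weak step τ α p r := by
  rcases h₂ with ⟨hα, h₂⟩ | ⟨hα, a, b, t₁, s, t₂⟩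
  · exact Or.inl ⟨hα, h₁.trans h₂⟩
  · exact Or.inr ⟨hα, a, b, h₁.trans t₁, s, t₂⟩

theorem Weak.trans_tauStar {p q r : P} {α : A} (h₁ : Weak step τ α p q)
    (h₂ : TauStar step τ q r) : Weak step τ α p r := by
  rcases h₁ with ⟨hα, h₁⟩ | ⟨hα, a, b, t₁, s, t₂⟩
  · exact Or.inl ⟨hα, h₁.trans h₂⟩
  · exact Or.inr ⟨hα, a, b, t₁, s, t₂.trans h₂⟩

theorem IsBisim.exists_tauStar {R : P → P → Prop} (hR : IsBisim step τ R) {p q p' : P}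
    (hpq : R p q) (h : TauStar step τ p p') : ∃ q', TauStar step τ q q' ∧ R p' q' := by
  induction h with
  | refl => exact ⟨q, .refl, hpq⟩
  | tail _ hst ih =>
    obtain ⟨q', hq', hR'⟩ := ih
    obtain ⟨q'', hw, hR''⟩ := hR.2 _ _ _ _ hR' hst
    exact ⟨q'', hq'.trans (weak_tau_iff.1 hw), hR''⟩

theorem IsBisim.exists_weak {R : P → P → Prop} (hR : IsBisim step τ R) {p q p' : P} {α : A}
    (hpq : R p q) (h : Weak step τ α p p') : ∃ q', Weak step τ α q q' ∧ R p' q' := by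
  rcases h with ⟨rfl, h⟩ | ⟨-, a, b, t₁, s, t₂⟩
  · obtain ⟨q', hq', hR'⟩ := hR.exists_tauStar hpq h
    exact ⟨q', weak_tau_iff.2 hq', hR'⟩
  · obtain ⟨qa, hqa, hRa⟩ := hR.exists_tauStar hpq t₁
    obtain ⟨qb, hqb, hRb⟩ := hR.2 _ _ _ _ hRa s
    obtain ⟨q', hq', hR'⟩ := hR.exists_tauStar hRb t₂
    exact ⟨q', hqa.trans_weak (hqb.trans_tauStar hq'), hR'⟩

theorem Bisim.exists_weak {p q p' : P} {α : A} (h : Bisim step τ p q)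
    (hw : Weak step τ α p p') : ∃ q', Weak step τ α q q' ∧ Bisim step τ p' q' := by
  obtain ⟨R, hR, hpq⟩ := h
  obtain ⟨q', hq', hR'⟩ := hR.exists_weak hpq hw
  exact ⟨q', hq', R, hR, hR'⟩

theorem Bisim.refl (p : P) : Bisim step τ p p :=
  ⟨Eq, ⟨fun _ _ => Eq.symm, fun _ _ _ p' hpq h => ⟨p', hpq ▸ Weak.of_step h, rfl⟩⟩, rfl⟩

theorem Bisim.symm {p q : P} (h : Bisim step τ p q) : Bisim step τ q p := by
  obtain ⟨R, hR, hpq⟩ := h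
  exact ⟨R, hR, hR.1 hpq⟩

theorem Bisim.trans {p q r : P} (h₁ : Bisim step τ p q) (h₂ : Bisim step τ q r) :
    Bisim step τ p r := by
  refine ⟨Relation.Comp (Bisim step τ) (Bisim step τ), ⟨?_, ?_⟩, q, h₁, h₂⟩
  · rintro a c ⟨b, hab, hbc⟩
    exact ⟨b, hbc.symm, hab.symm⟩
  · rintro a c α a' ⟨b, ⟨R, hR, hab⟩, hbc⟩ hst
    obtain ⟨b', hwb, hR'⟩ := hR.2 _ _ _ _ hab hst
    obtain ⟨c', hwc, hbc'⟩ := hbc.exists_weak hwb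
    exact ⟨c', hwc, b', ⟨R, hR, hR'⟩, hbc'⟩

theorem WeakJoinable.of_bisim {γ δ : A} {q₁ q₂ r₁ r₂ : P} (h₁ : Bisim step τ q₁ r₁)
    (h₂ : Bisim step τ q₂ r₂) (h : WeakJoinable step τ γ δ r₁ r₂) :
    WeakJoinable step τ γ δ q₁ q₂ := by
  obtain ⟨r₃, r₄, hr₃, hr₄, hr⟩ := h
  obtain ⟨q₃, hq₃, h₃⟩ := h₁.symm.exists_weak hr₃
  obtain ⟨q₄, hq₄, h₄⟩ := h₂.symm.exists_weak hr₄
  exact ⟨q₃, q₄, hq₃, hq₄, h₃.symm.trans (hr.trans h₄)⟩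

theorem TauStar.trans_weakSeq {s : List A} {p q r : P} (h₁ : TauStar step τ p q)
    (h₂ : WeakSeq step τ s q r) : WeakSeq step τ s p r := by
  cases s with
  | nil => exact h₁.trans h₂
  | cons α s =>
    obtain ⟨q', hw, hs⟩ := h₂
    exact ⟨q', h₁.trans_weak hw, hs⟩

theorem WeakSeq.append {s t : List A} {p q r : P} (h₁ : WeakSeq step τ s p q)
    (h₂ : WeakSeq step τ t q r) : WeakSeq step τ (s ++ t) p r := by
  induction s generalizing p with
  | nil => exact TauStar.trans_weakSeq h₁ h₂
  | cons α s ih =>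
    obtain ⟨p', hw, hs⟩ := h₁
    exact ⟨p', hw, ih hs⟩

theorem Deriv.exists_weakSeq {p q : P} (h : Deriv step τ p q) :
    ∃ s, (∀ α ∈ s, α ≠ τ) ∧ WeakSeq step τ s p q := by
  induction h with
  | refl => exact ⟨[], by simp, .refl⟩
  | tail _ hw ih =>
    obtain ⟨s, hs, hps⟩ := ih
    obtain ⟨γ, hw⟩ := hw
    by_cases hγ : γ = τ
    · subst hγ
      exact ⟨s, hs, by simpa using hps.append (t := []) (weak_tau_iff.1 hw)⟩
    · refine ⟨s ++ [γ], ?_, hps.append ⟨_, hw, .refl⟩⟩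
      simpa [or_imp, forall_and] using ⟨hs, hγ⟩

theorem Deriv.tail_tauStar {p q r : P} (h : Deriv step τ p q) (ht : TauStar step τ q r) :
    Deriv step τ p r :=
  h.tail ⟨τ, weak_tau_iff.2 ht⟩

theorem Determinate.of_deriv {p q : P} (hp : Determinate step τ p) (h : Deriv step τ p q) :
    Determinate step τ q := by
  obtain ⟨t, ht, hpq⟩ := h.exists_weakSeq
  intro s hs q₁ q₂ h₁ h₂
  refine hp (t ++ s) ?_ q₁ q₂ (hpq.append h₁) (hpq.append h₂)
  simpa [or_imp, forall_and] using ⟨ht, hs⟩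

theorem Determinate.bisim_of_weak {q q₁ q₂ : P} {α : A} (hq : Determinate step τ q)
    (h₁ : Weak step τ α q q₁) (h₂ : Weak step τ α q q₂) : Bisim step τ q₁ q₂ := by
  by_cases hα : α = τ
  · subst hα
    exact hq [] (by simp) q₁ q₂ (weak_tau_iff.1 h₁) (weak_tau_iff.1 h₂)
  · exact hq [α] (by simpa using hα) q₁ q₂ ⟨q₁, h₁, .refl⟩ ⟨q₂, h₂, .refl⟩

theorem Determinate.exists_strong_diamond {compat : A → A → Prop} {res : A → A → A}
    {equiv : P → P → Prop} {p q q₁ q₂ : P} {α β : A}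
    (hcomm : StronglyCommutes step τ compat res equiv p) (htaucomm : TauCommutes step τ p)
    (hq : Deriv step τ p q) (hdq : Determinate step τ q)
    (hαβ : α ≠ β) (hα : α ≠ τ) (hβ : β ≠ τ) (hc : compat α β)
    (h₁ : Weak step τ α q q₁) (h₂ : Weak step τ β q q₂) :
    ∃ b₁ b₂ c₁ c₂, Weak step τ α q b₁ ∧ Weak step τ β q b₂ ∧
      step b₁ (res β α) c₁ ∧ step b₂ (res α β) c₂ ∧ equiv c₁ c₂ := by
  obtain ⟨hβ', -⟩ | ⟨-, a, b, hqa, hab, -⟩ := h₂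
  · exact absurd hβ' hβ
  have hqa_bisim : Bisim step τ q a := hdq.bisim_of_weak (.refl_tau q) (weak_tau_iff.2 hqa)
  obtain ⟨_, hw⟩ := hqa_bisim.exists_weak h₁
  obtain ⟨hα', -⟩ | ⟨-, a', b₁, haa', ha'b₁, -⟩ := hw
  · exact absurd hα' hα
  have ha : Deriv step τ p a := hq.tail_tauStar hqa
  obtain ⟨b₂, ha'b₂, -⟩ := htaucomm a ha β a' b hβ haa' hab
  obtain ⟨c₁, c₂, hc₁, hc₂, hequiv⟩ :=
    hcomm a' (ha.tail_tauStar haa') α β b₁ b₂ hαβ hα hβ hc ha'b₁ ha'b₂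
  have hqa' : TauStar step τ q a' := hqa.trans haa'
  exact ⟨b₁, b₂, c₁, c₂, hqa'.trans_weak (.of_step ha'b₁), hqa'.trans_weak (.of_step ha'b₂),
    hc₁, hc₂, hequiv⟩

end

theorem determinate_implies_confluent_general {P A : Type}
    (step : P → A → P → Prop) (τ : A)
    (compat : A → A → Prop) (res : A → A → A)
    (equiv : P → P → Prop)
    (hres_self : ∀ α, res α α = τ)
    (hres_tau : ∀ α, res α τ = α)
    (htau_res : ∀ α, res τ α = τ)
    (hequiv_bisim : ∀ a b, equiv a b → Bisim step τ a b)
    (p : P)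
    (hdet : Determinate step τ p)
    (hcomm : ∀ q, Deriv step τ p q → ∀ α β q₁ q₂,
      α ≠ β → α ≠ τ → β ≠ τ → compat α β →
      step q α q₁ → step q β q₂ →
      ∃ q₃ q₄, step q₁ (res β α) q₃ ∧ step q₂ (res α β) q₄ ∧ equiv q₃ q₄)
    (htaucomm : ∀ q, Deriv step τ p q → ∀ β q₁' q₂', β ≠ τ →
      TauStar step τ q q₁' → step q β q₂' →
      ∃ q₃', step q₁' β q₃' ∧ TauStar step τ q₂' q₃') :
    Confluent step τ compat res p := by
  intro q hq α β q₁ q₂ hc h₁ h₂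
  have hdq : Determinate step τ q := hdet.of_deriv hq
  show WeakJoinable step τ (res β α) (res α β) q₁ q₂
  by_cases hαβ : α = β
  · subst hαβ
    rw [hres_self]
    exact ⟨q₁, q₂, .refl_tau q₁, .refl_tau q₂, hdq.bisim_of_weak h₁ h₂⟩
  by_cases hα : α = τ
  · subst hα
    rw [hres_tau, htau_res]
    exact .of_bisim (hdq.bisim_of_weak h₁ (.refl_tau q)) (.refl q₂)
      ⟨q₂, q₂, h₂, .refl_tau q₂, .refl q₂⟩
  by_cases hβ : β = τ
  · subst hβ
    rw [hres_tau, htau_res]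
    exact .of_bisim (.refl q₁) (hdq.bisim_of_weak h₂ (.refl_tau q))
      ⟨q₁, q₁, .refl_tau q₁, h₁, .refl q₁⟩
  obtain ⟨b₁, b₂, c₁, c₂, hb₁, hb₂, hc₁, hc₂, hequiv⟩ :=
    hdq.exists_strong_diamond hcomm htaucomm hq hαβ hα hβ hc h₁ h₂
  exact .of_bisim (hdq.bisim_of_weak h₁ hb₁) (hdq.bisim_of_weak h₂ hb₂)
    ⟨c₁, c₂, .of_step hc₁, .of_step hc₂, hequiv_bisim c₁ c₂ hequiv⟩

/-- Determinacy plus strong commutation of inputs/outputs implies confluence. -/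
theorem determinate_implies_confluent {P A : Type}
    (step : P → A → P → Prop) (τ : A)
    (compat : A → A → Prop) (res : A → A → A)
    (equiv : P → P → Prop)
    (hrefl : ∀ α, compat α α)
    (hres_self : ∀ α, res α α = τ)
    (hres_tau : ∀ α, res α τ = α)
    (htau_res : ∀ α, res τ α = τ)
    (hequiv_bisim : ∀ a b, equiv a b → Bisim step τ a b)
    (p : P)
    (hdet : Determinate step τ p)
    (hcomm : ∀ q, Deriv step τ p q → ∀ α β q₁ q₂,
      α ≠ β → α ≠ τ → β ≠ τ → compat α β →
      step q α q₁ → step q β q₂ →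
      ∃ q₃ q₄, step q₁ (res β α) q₃ ∧ step q₂ (res α β) q₄ ∧ equiv q₃ q₄)
    (htaucomm : ∀ q, Deriv step τ p q → ∀ β q₁' q₂', β ≠ τ →
      TauStar step τ q q₁' → step q β q₂' →
      ∃ q₃', step q₁' β q₃' ∧ TauStar step τ q₂' q₃') :
    Confluent step τ compat res p :=
  determinate_implies_confluent_general step τ compat res equiv hres_self hres_tau htau_res
    hequiv_bisim p hdet hcomm htaucomm
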